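/- arXiv:1611.00977 — 8 statements merged into one kernel-verified Lean document; each statement's English description precedes it below -/
import Mathlib

section
/- (Theorem 1, mixing form.) For any classical strategy (m, b) for the communication complexity game, define λ(x, ν) = (1/d) · |{x0 ∈ ZMod d : m(x0, x) − x0 = ν}| for x ∈ X, ν ∈ ZMod d, and define weights w(a) = ∏_{x ∈ X} λ(x, a(x)) for each a : X → ZMod d. Then w(a) ≥ 0 for every a, ∑_{a : X → ZMod d} w(a) = 1, and I(m, b) = ∑_{a : X → ZMod d} w(a) · I(m_a, b); that is, the payoff of any (possibly nonlinear) strategy is a convex (probabilistic) mixture of the payoffs of linear strategies. -/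
open Finset

/-!
The payoff depends on Alice's message only through the shift `m (x0, x) - x0`, and for a uniform
`x0` this shift at `x` has law `lam x`. Drawing the shifts `a x` independently from the `lam x`
gives the product weights `w`; since each payoff term involves a single coordinate `a x`, whose
marginal under `w` is again `lam x`, averaging the linear payoffs over `w` recovers `payoff m b`.
-/

/-- The average payoff of a classical strategy `(m, b)` in the communication complexity
game determined by input weights `p`, payoff coefficients `c` and target functions `F`. -/
noncomputable def payoff (d : ℕ) [NeZero d] {X Y J : Type} [Fintype X] [Fintype Y] [Fintype J]
    (p : X × Y → ℝ) (c : J × X × Y → ℝ) (F : J × X × Y → ZMod d)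
    (m : ZMod d × X → ZMod d) (b : Y → ZMod d) : ℝ :=
  (1 / (d : ℝ)) * ∑ x0 : ZMod d, ∑ xy : X × Y, p xy * ∑ j : J,
    c (j, xy.1, xy.2) *
      (if m (x0, xy.1) + b xy.2 = x0 + F (j, xy.1, xy.2) then (1 : ℝ) else 0)

theorem Fintype.sum_comp_eq_sum_card_fiber_mul {α β R : Type*} [Fintype α] [Fintype β]
    [DecidableEq β] [NonAssocSemiring R] (g : α → β) (h : β → R) :
    ∑ x, h (g x) = ∑ ν, (#{x | g x = ν} : R) * h ν := by
  rw [← Finset.sum_fiberwise' univ g h]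
  simp only [sum_const, nsmul_eq_mul]

theorem Fintype.sum_prod_mul_eval_of_sum_eq_one {ι κ R : Type*} [Fintype ι] [DecidableEq ι]
    [Fintype κ] [CommSemiring R] (f : ι → κ → R) (hf : ∀ i, ∑ k, f i k = 1) (i₀ : ι) (g : κ → R) :
    ∑ a : ι → κ, (∏ i, f i (a i)) * g (a i₀) = ∑ k, f i₀ k * g k := by
  -- absorb `g` into the `i₀`-th factor, then expand the product of sums
  set f' := Function.update f i₀ fun k => f i₀ k * g k
  have hrest : ∀ i ∈ ({i₀}ᶜ : Finset ι), f' i = f i := fun i hi =>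
    Function.update_of_ne (by simpa using hi) _ _
  have hsplit : ∀ a : ι → κ, (∏ i, f i (a i)) * g (a i₀) = ∏ i, f' i (a i) := fun a => by
    rw [Fintype.prod_eq_mul_prod_compl i₀, Fintype.prod_eq_mul_prod_compl i₀ fun i => f' i (a i),
      Finset.prod_congr rfl fun i hi => congrFun (hrest i hi) (a i)]
    simp [f', mul_right_comm]
  simp only [hsplit, ← Fintype.prod_sum]
  rw [Fintype.prod_eq_mul_prod_compl i₀, Finset.prod_congr rfl fun i hi => by rw [hrest i hi, hf]]
  simp [f']

variable {d : ℕ} [NeZero d] {X Y J : Type} [Fintype X] [Fintype Y] [Fintype J]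

/-- The payoff on input `xy` when Alice's message exceeds `x0` by `ν`; `payoff` depends on `m`
only through these shifts. -/
def shiftPayoff (c : J × X × Y → ℝ) (F : J × X × Y → ZMod d) (b : Y → ZMod d)
    (xy : X × Y) (ν : ZMod d) : ℝ :=
  ∑ j, c (j, xy.1, xy.2) * if ν + b xy.2 = F (j, xy.1, xy.2) then 1 else 0

theorem payoff_eq_sum_shiftPayoff (p : X × Y → ℝ) (c : J × X × Y → ℝ) (F : J × X × Y → ZMod d)
    (m : ZMod d × X → ZMod d) (b : Y → ZMod d) :
    payoff d p c F m b =
      ∑ xy, p xy * ((1 / (d : ℝ)) * ∑ x0, shiftPayoff c F b xy (m (x0, xy.1) - x0)) := by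
  unfold payoff shiftPayoff
  simp only [sub_add_eq_add_sub, sub_eq_iff_eq_add']
  rw [Finset.sum_comm, Finset.mul_sum]
  refine Finset.sum_congr rfl fun xy _ => ?_
  rw [← Finset.mul_sum, mul_left_comm]

theorem payoff_linear (p : X × Y → ℝ) (c : J × X × Y → ℝ) (F : J × X × Y → ZMod d)
    (a : X → ZMod d) (b : Y → ZMod d) :
    payoff d p c F (fun z => z.1 + a z.2) b = ∑ xy, p xy * shiftPayoff c F b xy (a xy.1) := by
  have hd : (d : ℝ) ≠ 0 := NeZero.ne _
  simp [payoff_eq_sum_shiftPayoff, hd]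

theorem theorem1_mixing_general (d : ℕ) [NeZero d] (X Y J : Type)
    [Fintype X] [DecidableEq X] [Fintype Y] [Fintype J]
    (p : X × Y → ℝ)
    (c : J × X × Y → ℝ) (F : J × X × Y → ZMod d)
    (m : ZMod d × X → ZMod d) (b : Y → ZMod d)
    (lam : X → ZMod d → ℝ)
    (hlam : ∀ x ν, lam x ν =
      (1 / (d : ℝ)) * ((univ.filter fun x0 : ZMod d => m (x0, x) - x0 = ν).card : ℝ))
    (w : (X → ZMod d) → ℝ) (hw : ∀ a, w a = ∏ x : X, lam x (a x)) :
    (∀ a : X → ZMod d, 0 ≤ w a) ∧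
    (∑ a : X → ZMod d, w a = 1) ∧
    payoff d p c F m b =
      ∑ a : X → ZMod d, w a * payoff d p c F (fun z => z.1 + a z.2) b := by
  have hmean : ∀ x (g : ZMod d → ℝ),
      1 / (d : ℝ) * ∑ x0, g (m (x0, x) - x0) = ∑ ν, lam x ν * g ν := fun x g => by
    simp only [Fintype.sum_comp_eq_sum_card_fiber_mul (fun x0 => m (x0, x) - x0), mul_sum, hlam,
      mul_assoc]
  have hlam_sum : ∀ x, ∑ ν, lam x ν = 1 := fun x => by
    simpa [NeZero.ne] using (hmean x 1).symm
  refine ⟨fun a => ?_, ?_, ?_⟩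
  · rw [hw]
    exact prod_nonneg fun x _ => by rw [hlam]; positivity
  · simp only [hw, ← Fintype.prod_sum, hlam_sum, prod_const_one]
  · simp only [payoff_linear, mul_sum]
    rw [payoff_eq_sum_shiftPayoff, Finset.sum_comm]
    refine sum_congr rfl fun xy _ => ?_
    rw [hmean, ← Fintype.sum_prod_mul_eval_of_sum_eq_one lam hlam_sum xy.1, mul_sum]
    simp only [hw]
    exact sum_congr rfl fun a _ => by ring

/-- Theorem 1 (mixing form): the payoff of any (possibly nonlinear) classical strategy is a
convex mixture of the payoffs of linear strategies `m_a(x0, x) = x0 + a x`. -/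
theorem theorem1_mixing (d : ℕ) [NeZero d] (X Y J : Type)
    [Fintype X] [DecidableEq X] [Fintype Y] [Fintype J]
    (p : X × Y → ℝ) (hp : ∀ xy, 0 ≤ p xy)
    (c : J × X × Y → ℝ) (F : J × X × Y → ZMod d)
    (m : ZMod d × X → ZMod d) (b : Y → ZMod d)
    (lam : X → ZMod d → ℝ)
    (hlam : ∀ x ν, lam x ν =
      (1 / (d : ℝ)) * ((univ.filter fun x0 : ZMod d => m (x0, x) - x0 = ν).card : ℝ))
    (w : (X → ZMod d) → ℝ) (hw : ∀ a, w a = ∏ x : X, lam x (a x)) :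
    (∀ a : X → ZMod d, 0 ≤ w a) ∧
    (∑ a : X → ZMod d, w a = 1) ∧
    payoff d p c F m b =
      ∑ a : X → ZMod d, w a * payoff d p c F (fun z => z.1 + a z.2) b :=
  theorem1_mixing_general d X Y J p c F m b lam hlam w hw
end

section
/- (Theorem 1, optimality of linear strategies.) For every classical strategy (m, b) for the communication complexity game there exists a function a : X → ZMod d such that I(m, b) ≤ I(m_a, b); hence the optimal classical performance is achieved by a linear strategy. -/
/-!
Write each message as `m (x0, x) = x0 + s` with offset `s = m (x0, x) - x0`. Whether Bob's
output `x0 + s + b y` hits `x0 + F (j, x, y)` then no longer depends on `x0`, so the payoff is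
an average over `x0` of a sum over `x` of a function `offsetPayoff x s` of the offset alone.
Choosing for every `x` an offset `a x` maximizing `offsetPayoff x` dominates every term, and
this choice is exactly the linear strategy `m_a`.
-/

open Finset

section OffsetPayoff

variable {d : ℕ} {X Y J : Type} [Fintype Y] [Fintype J]

noncomputable def offsetPayoff (p : X × Y → ℝ) (c : J × X × Y → ℝ) (F : J × X × Y → ZMod d)
    (b : Y → ZMod d) (x : X) (s : ZMod d) : ℝ :=
  ∑ y : Y, p (x, y) * ∑ j : J, c (j, x, y) * if s + b y = F (j, x, y) then 1 else 0

variable [NeZero d] [Fintype X]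

theorem payoff_eq_sum_offsetPayoff (p : X × Y → ℝ) (c : J × X × Y → ℝ)
    (F : J × X × Y → ZMod d) (m : ZMod d × X → ZMod d) (b : Y → ZMod d) :
    payoff d p c F m b =
      1 / (d : ℝ) * ∑ x0 : ZMod d, ∑ x : X, offsetPayoff p c F b x (m (x0, x) - x0) := by
  have hit_iff (x0 : ZMod d) (x : X) (y : Y) (j : J) :
      m (x0, x) + b y = x0 + F (j, x, y) ↔ m (x0, x) - x0 + b y = F (j, x, y) := by
    rw [sub_add_eq_add_sub, sub_eq_iff_eq_add']
  simp only [payoff, offsetPayoff, Fintype.sum_prod_type, hit_iff]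

end OffsetPayoff

theorem theorem1_linear_optimal_general (d : ℕ) [NeZero d] (X Y J : Type)
    [Fintype X] [Fintype Y] [Fintype J]
    (p : X × Y → ℝ)
    (c : J × X × Y → ℝ) (F : J × X × Y → ZMod d)
    (m : ZMod d × X → ZMod d) (b : Y → ZMod d) :
    ∃ a : X → ZMod d, payoff d p c F m b ≤ payoff d p c F (fun z => z.1 + a z.2) b := by
  choose a ha using fun x => Finite.exists_max (offsetPayoff p c F b x)
  refine ⟨a, ?_⟩
  rw [payoff_eq_sum_offsetPayoff, payoff_eq_sum_offsetPayoff]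
  gcongr with x0 _ x _
  simpa only [add_sub_cancel_left] using ha x _

/-- Theorem 1 (optimality of linear strategies): every classical strategy `(m, b)` is
outperformed (weakly) by some linear strategy `m_a(x0, x) = x0 + a x` with the same `b`. -/
theorem theorem1_linear_optimal (d : ℕ) [NeZero d] (X Y J : Type)
    [Fintype X] [Fintype Y] [Fintype J]
    (p : X × Y → ℝ) (hp : ∀ xy, 0 ≤ p xy)
    (c : J × X × Y → ℝ) (F : J × X × Y → ZMod d)
    (m : ZMod d × X → ZMod d) (b : Y → ZMod d) :
    ∃ a : X → ZMod d, payoff d p c F m b ≤ payoff d p c F (fun z => z.1 + a z.2) b :=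
  theorem1_linear_optimal_general d X Y J p c F m b
end

section
/- (Theorem 2, mixing form for correlation-assisted strategies.) For any correlation q and any correlation-assisted message function μ : ZMod d × X × ZMod d → ZMod d, define λ(x, α, ν) = (1/d) · |{x0 ∈ ZMod d : μ(x0, x, α) − x0 = ν}| and define weights w(ξ) = ∏_{(x,α) ∈ X × ZMod d} λ(x, α, ξ(x,α)) for each ξ : X × ZMod d → ZMod d. Then w(ξ) ≥ 0 for every ξ, ∑_{ξ : X × ZMod d → ZMod d} w(ξ) = 1, and I_q(μ) = ∑_{ξ : X × ZMod d → ZMod d} w(ξ) · I_q(μ_ξ); that is, the payoff of any correlation-assisted messaging strategy is a convex mixture of payoffs of linear messaging strategies. -/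
/-!
Writing `ν = μ(x0, x, α) - x0`, Bob's success for a given `x0` depends on `μ` only through `ν`, so
averaging over the uniform `x0` shows that the payoff is a linear function of the frequencies
`λ(x, α, ·)` of these shifts. A linear strategy `μ_ξ` has point-mass frequencies `δ_{ξ(x, α)}`,
and under the product weight `w` the value `ξ(x, α)` has marginal law `λ(x, α, ·)`; hence mixing
the payoffs of the `μ_ξ` with weights `w` reproduces the frequencies of `μ`, and so its payoff.
-/

open Finset

/-- The average payoff of a correlation-assisted strategy with message function `μ`
(depending on `x0`, Alice's input `x` and Alice's outcome `α`), where Bob outputs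
`μ + β` for his outcome `β`, in the communication complexity game determined by input
weights `p`, payoff coefficients `c`, target functions `F` and correlation `q`. -/
noncomputable def qpayoff (d : ℕ) [NeZero d] {X Y J : Type} [Fintype X] [Fintype Y] [Fintype J]
    (p : X × Y → ℝ) (c : J × X × Y → ℝ) (F : J × X × Y → ZMod d)
    (q : X × Y → ZMod d × ZMod d → ℝ)
    (μ : ZMod d × X × ZMod d → ZMod d) : ℝ :=
  (1 / (d : ℝ)) * ∑ x0 : ZMod d, ∑ xy : X × Y, p xy * ∑ j : J,
    c (j, xy.1, xy.2) * ∑ ab : ZMod d × ZMod d, q xy ab *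
      (if μ (x0, xy.1, ab.1) + ab.2 = x0 + F (j, xy.1, xy.2) then (1 : ℝ) else 0)

section ProductWeights

variable {A B R : Type*} [Fintype A] [DecidableEq A] [Fintype B] [CommSemiring R]

theorem sum_pi_prod_eq_one {f : A → B → R} (hf : ∀ a, ∑ b, f a b = 1) :
    ∑ ξ : A → B, ∏ a, f a (ξ a) = 1 := by
  rw [← Fintype.prod_sum, prod_eq_one fun a _ => hf a]

theorem sum_pi_prod_mul_apply {f : A → B → R} (hf : ∀ a, ∑ b, f a b = 1) (a₀ : A)
    (g : B → R) : ∑ ξ : A → B, (∏ a, f a (ξ a)) * g (ξ a₀) = ∑ b, f a₀ b * g b := by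
  let f' : A → B → R := fun a b => if a = a₀ then f a b * g b else f a b
  have hf' (ξ : A → B) : (∏ a, f a (ξ a)) * g (ξ a₀) = ∏ a, f' a (ξ a) := by
    rw [Fintype.prod_eq_mul_prod_compl a₀, Fintype.prod_eq_mul_prod_compl a₀]
    simp only [f', if_pos rfl]
    rw [prod_congr rfl fun a ha => if_neg (mem_compl.1 ha ∘ mem_singleton.2)]
    ring
  simp only [hf']
  rw [← Fintype.prod_sum, Fintype.prod_eq_single a₀ fun a ha => by simp only [f', if_neg ha, hf]]
  simp only [f', if_pos rfl]

end ProductWeights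

section Payoff

variable {d : ℕ} [NeZero d] {X : Type}

/-- The paper's `λ(x, α, ν)`. -/
noncomputable def shiftFreq (μ : ZMod d × X × ZMod d → ZMod d) (x : X) (α ν : ZMod d) : ℝ :=
  (1 / (d : ℝ)) * ((univ.filter fun x0 : ZMod d => μ (x0, x, α) - x0 = ν).card : ℝ)

theorem shiftFreq_nonneg (μ : ZMod d × X × ZMod d → ZMod d) (x : X) (α ν : ZMod d) :
    0 ≤ shiftFreq μ x α ν := by
  unfold shiftFreq; positivity

theorem sum_shiftFreq (μ : ZMod d × X × ZMod d → ZMod d) (x : X) (α : ZMod d) :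
    ∑ ν, shiftFreq μ x α ν = 1 := by
  have hd : (d : ℝ) ≠ 0 := Nat.cast_ne_zero.2 (NeZero.ne d)
  simp only [shiftFreq]
  rw [← mul_sum, ← Nat.cast_sum, ← card_eq_sum_card_fiberwise fun _ _ => mem_univ _,
    card_univ, ZMod.card, one_div_mul_cancel hd]

theorem shiftFreq_add_const (ξ : X × ZMod d → ZMod d) (x : X) (α ν : ZMod d) :
    shiftFreq (fun z => z.1 + ξ (z.2.1, z.2.2)) x α ν = if ξ (x, α) = ν then 1 else 0 := by
  have hd : (d : ℝ) ≠ 0 := Nat.cast_ne_zero.2 (NeZero.ne d)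
  simp only [shiftFreq, add_sub_cancel_left]
  split_ifs with h
  · rw [filter_true_of_mem fun _ _ => h, card_univ, ZMod.card, one_div_mul_cancel hd]
  · rw [filter_false_of_mem fun _ _ => h, card_empty, Nat.cast_zero, mul_zero]

variable {Y J : Type} [Fintype X] [Fintype Y] [Fintype J]

def densityPayoff (p : X × Y → ℝ) (c : J × X × Y → ℝ) (F : J × X × Y → ZMod d)
    (q : X × Y → ZMod d × ZMod d → ℝ) (ρ : X → ZMod d → ZMod d → ℝ) : ℝ :=
  ∑ xy : X × Y, p xy * ∑ j : J, c (j, xy.1, xy.2) *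
    ∑ ab : ZMod d × ZMod d, q xy ab * ρ xy.1 ab.1 (F (j, xy.1, xy.2) - ab.2)

theorem qpayoff_eq_densityPayoff (p : X × Y → ℝ) (c : J × X × Y → ℝ)
    (F : J × X × Y → ZMod d) (q : X × Y → ZMod d × ZMod d → ℝ)
    (μ : ZMod d × X × ZMod d → ZMod d) :
    qpayoff d p c F q μ = densityPayoff p c F q (shiftFreq μ) := by
  have hcount (x : X) (j : J) (y : Y) (ab : ZMod d × ZMod d) :
      ∑ x0 : ZMod d, (if μ (x0, x, ab.1) + ab.2 = x0 + F (j, x, y) then (1 : ℝ) else 0) =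
        (univ.filter fun x0 : ZMod d => μ (x0, x, ab.1) - x0 = F (j, x, y) - ab.2).card := by
    rw [← sum_boole]
    refine sum_congr rfl fun x0 _ => if_congr ?_ rfl rfl
    constructor <;> intro h <;> linear_combination h
  simp only [densityPayoff, shiftFreq, ← hcount, qpayoff, mul_sum]
  rw [sum_comm]
  refine sum_congr rfl fun xy _ => ?_
  rw [sum_comm]
  refine sum_congr rfl fun j _ => ?_
  rw [sum_comm]
  exact sum_congr rfl fun ab _ => sum_congr rfl fun x0 _ => by ring

theorem sum_mul_densityPayoff {ι : Type*} (s : Finset ι) (w : ι → ℝ) (p : X × Y → ℝ)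
    (c : J × X × Y → ℝ) (F : J × X × Y → ZMod d) (q : X × Y → ZMod d × ZMod d → ℝ)
    (ρ : ι → X → ZMod d → ZMod d → ℝ) :
    ∑ i ∈ s, w i * densityPayoff p c F q (ρ i) =
      densityPayoff p c F q (fun x α ν => ∑ i ∈ s, w i * ρ i x α ν) := by
  simp only [densityPayoff, mul_sum]
  rw [sum_comm]
  refine sum_congr rfl fun xy _ => ?_
  rw [sum_comm]
  refine sum_congr rfl fun j _ => ?_
  rw [sum_comm]
  exact sum_congr rfl fun ab _ => sum_congr rfl fun i _ => by ring

end Payoff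

theorem theorem2_mixing_general (d : ℕ) [NeZero d] (X Y J : Type)
    [Fintype X] [DecidableEq X] [Fintype Y] [Fintype J]
    (p : X × Y → ℝ)
    (c : J × X × Y → ℝ) (F : J × X × Y → ZMod d)
    (q : X × Y → ZMod d × ZMod d → ℝ)
    (μ : ZMod d × X × ZMod d → ZMod d)
    (lam : X → ZMod d → ZMod d → ℝ)
    (hlam : ∀ x α ν, lam x α ν =
      (1 / (d : ℝ)) * ((univ.filter fun x0 : ZMod d => μ (x0, x, α) - x0 = ν).card : ℝ))
    (w : (X × ZMod d → ZMod d) → ℝ)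
    (hw : ∀ ξ, w ξ = ∏ xα : X × ZMod d, lam xα.1 xα.2 (ξ xα)) :
    (∀ ξ : X × ZMod d → ZMod d, 0 ≤ w ξ) ∧
    (∑ ξ : X × ZMod d → ZMod d, w ξ = 1) ∧
    qpayoff d p c F q μ =
      ∑ ξ : X × ZMod d → ZMod d,
        w ξ * qpayoff d p c F q (fun z => z.1 + ξ (z.2.1, z.2.2)) := by
  obtain rfl : lam = shiftFreq μ := funext₃ hlam
  obtain rfl : w = fun ξ => ∏ xα : X × ZMod d, shiftFreq μ xα.1 xα.2 (ξ xα) := funext hw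
  have hsum (xα : X × ZMod d) : ∑ ν, shiftFreq μ xα.1 xα.2 ν = 1 := sum_shiftFreq μ _ _
  refine ⟨fun ξ => prod_nonneg fun xα _ => shiftFreq_nonneg μ _ _ _, sum_pi_prod_eq_one hsum, ?_⟩
  simp only [qpayoff_eq_densityPayoff, sum_mul_densityPayoff, shiftFreq_add_const]
  congr
  funext x α ν
  simpa using (sum_pi_prod_mul_apply hsum (x, α) fun b => if b = ν then (1 : ℝ) else 0).symm

/-- Theorem 2 (mixing form): the payoff of any correlation-assisted messaging strategy is
a convex mixture of the payoffs of the linear strategies `μ_ξ(x0, x, α) = x0 + ξ (x, α)`. -/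
theorem theorem2_mixing (d : ℕ) [NeZero d] (X Y J : Type)
    [Fintype X] [DecidableEq X] [Fintype Y] [Fintype J]
    (p : X × Y → ℝ) (hp : ∀ xy, 0 ≤ p xy)
    (c : J × X × Y → ℝ) (F : J × X × Y → ZMod d)
    (q : X × Y → ZMod d × ZMod d → ℝ)
    (hq0 : ∀ xy ab, 0 ≤ q xy ab) (hq1 : ∀ xy, ∑ ab : ZMod d × ZMod d, q xy ab = 1)
    (μ : ZMod d × X × ZMod d → ZMod d)
    (lam : X → ZMod d → ZMod d → ℝ)
    (hlam : ∀ x α ν, lam x α ν =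
      (1 / (d : ℝ)) * ((univ.filter fun x0 : ZMod d => μ (x0, x, α) - x0 = ν).card : ℝ))
    (w : (X × ZMod d → ZMod d) → ℝ)
    (hw : ∀ ξ, w ξ = ∏ xα : X × ZMod d, lam xα.1 xα.2 (ξ xα)) :
    (∀ ξ : X × ZMod d → ZMod d, 0 ≤ w ξ) ∧
    (∑ ξ : X × ZMod d → ZMod d, w ξ = 1) ∧
    qpayoff d p c F q μ =
      ∑ ξ : X × ZMod d → ZMod d,
        w ξ * qpayoff d p c F q (fun z => z.1 + ξ (z.2.1, z.2.2)) :=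
  theorem2_mixing_general d X Y J p c F q μ lam hlam w hw
end

section
/- (Theorem 2, optimality of linear messaging with correlations.) For every correlation q and every correlation-assisted message function μ : ZMod d × X × ZMod d → ZMod d there exists ξ : X × ZMod d → ZMod d such that I_q(μ) ≤ I_q(μ_ξ); hence the optimal correlation-assisted (in particular entanglement-assisted) performance is achieved by a linear messaging strategy. -/
open Finset

/-!
Bob's success condition `μ(x0, x, α) + β = x0 + F` depends on the round `x0` only through the
offset `μ(x0, ·, ·) - x0`. Hence the payoff of `μ` is the average over `x0` of the payoffs of the
linear strategies whose offsets are `μ(x0, ·, ·) - x0`, and the best of these does at least as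
well as `μ`.
-/

open scoped BigOperators

section LinearMessaging

variable {d : ℕ} [NeZero d] {X Y J : Type} [Fintype X] [Fintype Y] [Fintype J]
  (p : X × Y → ℝ) (c : J × X × Y → ℝ) (F : J × X × Y → ZMod d)
  (q : X × Y → ZMod d × ZMod d → ℝ)

noncomputable def linearPayoff (ξ : X × ZMod d → ZMod d) : ℝ :=
  ∑ xy : X × Y, p xy * ∑ j : J, c (j, xy.1, xy.2) * ∑ ab : ZMod d × ZMod d, q xy ab *
    (if ξ (xy.1, ab.1) + ab.2 = F (j, xy.1, xy.2) then (1 : ℝ) else 0)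

theorem qpayoff_eq_expect_linearPayoff (μ : ZMod d × X × ZMod d → ZMod d) :
    qpayoff d p c F q μ =
      𝔼 x0 : ZMod d, linearPayoff p c F q (fun xa => μ (x0, xa.1, xa.2) - x0) := by
  have hcond : ∀ (x0 m b f : ZMod d), (m + b = x0 + f) ↔ (m - x0 + b = f) := fun x0 m b f => by
    rw [sub_add_eq_add_sub, sub_eq_iff_eq_add']
  simp only [qpayoff, linearPayoff, hcond, Fintype.expect_eq_sum_div_card, ZMod.card]
  ring

theorem qpayoff_linear (ξ : X × ZMod d → ZMod d) :
    qpayoff d p c F q (fun z => z.1 + ξ (z.2.1, z.2.2)) = linearPayoff p c F q ξ := by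
  simp only [qpayoff_eq_expect_linearPayoff, add_sub_cancel_left, Fintype.expect_const]

end LinearMessaging

theorem theorem2_linear_optimal_general (d : ℕ) [NeZero d] (X Y J : Type)
    [Fintype X] [Fintype Y] [Fintype J]
    (p : X × Y → ℝ)
    (c : J × X × Y → ℝ) (F : J × X × Y → ZMod d)
    (q : X × Y → ZMod d × ZMod d → ℝ)
    (μ : ZMod d × X × ZMod d → ZMod d) :
    ∃ ξ : X × ZMod d → ZMod d,
      qpayoff d p c F q μ ≤ qpayoff d p c F q (fun z => z.1 + ξ (z.2.1, z.2.2)) := by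
  obtain ⟨x0, -, hx0⟩ := exists_le_of_le_expect univ_nonempty
    (qpayoff_eq_expect_linearPayoff p c F q μ).le
  exact ⟨fun xa => μ (x0, xa.1, xa.2) - x0, hx0.trans_eq (qpayoff_linear p c F q _).symm⟩

/-- Theorem 2 (optimality of linear messaging): every correlation-assisted messaging
strategy `μ` is outperformed (weakly) by some linear strategy
`μ_ξ(x0, x, α) = x0 + ξ (x, α)`. -/
theorem theorem2_linear_optimal (d : ℕ) [NeZero d] (X Y J : Type)
    [Fintype X] [Fintype Y] [Fintype J]
    (p : X × Y → ℝ) (hp : ∀ xy, 0 ≤ p xy)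
    (c : J × X × Y → ℝ) (F : J × X × Y → ZMod d)
    (q : X × Y → ZMod d × ZMod d → ℝ)
    (hq0 : ∀ xy ab, 0 ≤ q xy ab) (hq1 : ∀ xy, ∑ ab : ZMod d × ZMod d, q xy ab = 1)
    (μ : ZMod d × X × ZMod d → ZMod d) :
    ∃ ξ : X × ZMod d → ZMod d,
      qpayoff d p c F q μ ≤ qpayoff d p c F q (fun z => z.1 + ξ (z.2.1, z.2.2)) :=
  theorem2_linear_optimal_general d X Y J p c F q μ
end

section
/- (Theorem 3, prepare-transmit-measure reproduces the entanglement-assisted payoff.) Let ρ : Matrix (A × B) (A × B) ℂ, let Π : X → ZMod d → Matrix A A ℂ (Alice's measurement operators) and Q : Y → ZMod d → Matrix B B ℂ (Bob's measurement operators). Define the prepared states ρ_{x0,x} := (d : ℂ) • Tr_A((Π x (−x0) ⊗ 1) * ρ) for x0 ∈ ZMod d, x ∈ X. Then the prepare-transmit-measure payoff (1/d) · ∑_{x0 ∈ ZMod d} ∑_{(x,y) ∈ X × Y} (p(x,y) : ℂ) · ∑_{j ∈ J} (c(j,x,y) : ℂ) · trace(ρ_{x0,x} * Q y (x0 + F(j,x,y)))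 equals the entanglement-assisted linear-strategy (Bell) payoff ∑_{(x,y) ∈ X × Y} (p(x,y) : ℂ) · ∑_{j ∈ J} (c(j,x,y) : ℂ) · ∑_{α ∈ ZMod d} trace((Π x α ⊗ Q y (F(j,x,y) − α)) * ρ). -/
/-!
Moving `Q` inside the partial trace gives `Tr((Tr_A((Π ⊗ 1) ρ)) Q) = Tr((Π ⊗ Q) ρ)`, so the
prepared state `ρ_{x0,x}` measured with `Q y (x0 + F)` scores exactly `d` times the Bell term
`Tr((Π x (-x0) ⊗ Q y (x0 + F)) ρ)`. Substituting `x0 = -α` turns this into the Bell term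
with Alice's outcome `α` and Bob's outcome `F - α`, and the factor `d` cancels the average
over the shared key `x0`.
-/

open Kronecker

/-- Partial trace over the first tensor factor:
`trA M j k = ∑ i, M (i, j) (i, k)`. -/
noncomputable def trA {A B : Type} [Fintype A] (M : Matrix (A × B) (A × B) ℂ) :
    Matrix B B ℂ :=
  fun j k => ∑ i : A, M (i, j) (i, k)

theorem trace_trA_mul {A B : Type} [Fintype A] [Fintype B] [DecidableEq A]
    (M : Matrix (A × B) (A × B) ℂ) (Q : Matrix B B ℂ) :
    (trA M * Q).trace = (M * ((1 : Matrix A A ℂ) ⊗ₖ Q)).trace := by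
  simp only [Matrix.trace, Matrix.diag, Matrix.mul_apply, trA, Fintype.sum_prod_type,
    Matrix.kroneckerMap_apply, Matrix.one_apply, ite_mul, one_mul, zero_mul, mul_ite, mul_zero,
    Finset.sum_ite_irrel, Finset.sum_const_zero, Finset.sum_ite_eq', Finset.mem_univ, if_true,
    Finset.sum_mul]
  exact Finset.sum_comm_cycle

theorem trace_trA_kronecker_one_mul_mul {A B : Type} [Fintype A] [Fintype B] [DecidableEq A]
    [DecidableEq B] (P : Matrix A A ℂ) (Q : Matrix B B ℂ) (ρ : Matrix (A × B) (A × B) ℂ) :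
    (trA ((P ⊗ₖ (1 : Matrix B B ℂ)) * ρ) * Q).trace = ((P ⊗ₖ Q) * ρ).trace := by
  rw [trace_trA_mul, Matrix.trace_mul_cycle, ← Matrix.mul_kronecker_mul, Matrix.one_mul,
    Matrix.mul_one]

/-- Theorem 3: the prepare-transmit-measure protocol whose prepared states are
`ρ_{x0,x} = d • Tr_A ((Π x (-x0) ⊗ 1) * ρ)` achieves exactly the entanglement-assisted
linear-strategy (Bell) payoff of the state `ρ` with Alice's measurement operators `Pa`
and Bob's measurement operators `Q`. -/
theorem theorem3_ptm_reproduces_bell (d : ℕ) [NeZero d] (A B X Y J : Type)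
    [Fintype A] [DecidableEq A] [Fintype B] [DecidableEq B]
    [Fintype X] [Fintype Y] [Fintype J]
    (p : X × Y → ℝ) (c : J × X × Y → ℝ) (F : J × X × Y → ZMod d)
    (ρ : Matrix (A × B) (A × B) ℂ)
    (Pa : X → ZMod d → Matrix A A ℂ) (Q : Y → ZMod d → Matrix B B ℂ) :
    (1 / (d : ℂ)) * ∑ x0 : ZMod d, ∑ xy : X × Y, (p xy : ℂ) * ∑ j : J,
        (c (j, xy.1, xy.2) : ℂ) *
          (((d : ℂ) • trA ((Pa xy.1 (-x0) ⊗ₖ (1 : Matrix B B ℂ)) * ρ)) *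
            Q xy.2 (x0 + F (j, xy.1, xy.2))).trace
      = ∑ xy : X × Y, (p xy : ℂ) * ∑ j : J, (c (j, xy.1, xy.2) : ℂ) *
          ∑ α : ZMod d,
            ((Pa xy.1 α ⊗ₖ Q xy.2 (F (j, xy.1, xy.2) - α)) * ρ).trace := by
  have hd : (d : ℂ) ≠ 0 := NeZero.ne _
  rw [one_div_mul_eq_div, div_eq_iff hd, ← Equiv.sum_comp (Equiv.neg (ZMod d)), Finset.sum_comm]
  simp only [Matrix.smul_mul, Matrix.trace_smul, smul_eq_mul, trace_trA_kronecker_one_mul_mul,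
    Equiv.neg_apply, neg_neg, neg_add_eq_sub, Finset.mul_sum, Finset.sum_mul]
  exact Finset.sum_congr rfl fun _ _ => Finset.sum_comm.trans <|
    Finset.sum_congr rfl fun _ _ => Finset.sum_congr rfl fun _ _ => by ring
end

section
/- (Lemma 1, converse rigidity part, support version.) If s ∈ ZMod d is such that K(l) = 0 for every l ∈ ZMod d with l ≠ s, then n(x) = n(0) + s·x for all x ∈ ZMod d, and K(s) = ω^{n(0)}; that is, if only one Fourier coefficient is nonzero then the exponent function is linear and that coefficient is a power of ω. -/
/-!
With `ω = exp (2πi/d)`, `ν ↦ ω ^ ν.val` is Mathlib's standard additive character `e` of `ZMod d`,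
so `K` is `1/d` times the discrete Fourier transform of `B = e ∘ n`. Fourier inversion with a
transform supported at `s` gives `e (n y) = K s · e (s y)`; at `y = 0` this is `K s = e (n 0)`, and
then `e (n y) = e (n 0 + s y)` for all `y`, so `n y = n 0 + s y` by injectivity of `e`.
-/

open ZMod

namespace ZMod

variable {N : ℕ} [NeZero N]

lemma exp_pow_val_eq_stdAddChar (j : ZMod N) :
    Complex.exp (2 * Real.pi * Complex.I / N) ^ j.val = stdAddChar j := by
  rw [stdAddChar_apply, toCircle_apply, ← Complex.exp_nat_mul]
  ring_nf

lemma apply_eq_stdAddChar_smul_of_dft_eq_zero_of_ne {E : Type*} [AddCommGroup E] [Module ℂ E]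
    {Φ : ZMod N → E} {s : ZMod N} (hΦ : ∀ l, l ≠ s → 𝓕 Φ l = 0) (y : ZMod N) :
    Φ y = stdAddChar (s * y) • ((N : ℂ)⁻¹ • 𝓕 Φ s) := by
  conv_lhs => rw [← dft.symm_apply_apply Φ]
  rw [invDFT_apply,
    Finset.sum_eq_single s (fun l _ hl ↦ by rw [hΦ l hl, smul_zero]) (by simp), smul_comm]

lemma sum_inv_stdAddChar_mul_eq_dft (f : ZMod N → ℂ) (l : ZMod N) :
    ∑ x, (stdAddChar (l * x))⁻¹ * f x = 𝓕 f l := by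
  simp only [dft_apply, smul_eq_mul, ← AddChar.map_neg_eq_inv, mul_comm l]

end ZMod

/-- Lemma 1 (converse rigidity part, support version): if the discrete Fourier transform
`K l = (1/d) ∑ x, ω^{-(l·x)} ω^{n x}` of `B x = ω^{n x}` vanishes at every index `l ≠ s`,
then the exponent function is linear, `n x = n 0 + s·x`, and `K s = ω^{n 0}`. -/
theorem lemma1_converse_rigidity_support (d : ℕ) [NeZero d]
    (ω : ℂ) (hω : ω = Complex.exp (2 * Real.pi * Complex.I / d))
    (n : ZMod d → ZMod d) (s : ZMod d)
    (h : ∀ l : ZMod d, l ≠ s →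
      (1 / (d : ℂ)) * (∑ x : ZMod d, (ω ^ (l * x).val)⁻¹ * ω ^ (n x).val) = 0) :
    (∀ x : ZMod d, n x = n 0 + s * x) ∧
    (1 / (d : ℂ)) * (∑ x : ZMod d, (ω ^ (s * x).val)⁻¹ * ω ^ (n x).val) = ω ^ (n 0).val := by
  subst hω
  simp only [exp_pow_val_eq_stdAddChar, sum_inv_stdAddChar_mul_eq_dft, one_div] at h ⊢
  set Φ : ZMod d → ℂ := fun x ↦ stdAddChar (n x)
  have hd : (d : ℂ)⁻¹ ≠ 0 := inv_ne_zero (NeZero.ne _)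
  have hΦ := apply_eq_stdAddChar_smul_of_dft_eq_zero_of_ne (Φ := Φ)
    (fun l hl ↦ (mul_eq_zero.mp (h l hl)).resolve_left hd)
  have hKs : (d : ℂ)⁻¹ * 𝓕 Φ s = stdAddChar (n 0) := by
    simpa using (hΦ 0).symm
  refine ⟨fun y ↦ injective_stdAddChar ?_, hKs⟩
  rw [AddChar.map_add_eq_mul, ← hKs, mul_comm]
  exact hΦ y
end

section
/- (Lemma 1, converse rigidity part, modulus version.) If s ∈ ZMod d is such that |K(s)| = 1, then there exists t ∈ ZMod d with n(x) = t + s·x for all x ∈ ZMod d (and then K(s) = ω^t); that is, a Fourier coefficient of B has unit modulus only when the exponent function is linear. -/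
/-!
With `ψ = ZMod.stdAddChar` we have `ω ^ a.val = ψ a`, so the coefficient is the average of the
unit complex numbers `ψ (n x - s * x)`. Such an average has modulus one only if all of them
coincide (`ℂ` is strictly convex), and `ψ` is injective, so `n x - s * x` is constant.
-/

open Finset

theorem norm_add_eq_of_norm_sum_eq_sum_norm {ι E : Type*} [SeminormedAddCommGroup E]
    {s : Finset ι} {f : ι → E} (h : ‖∑ k ∈ s, f k‖ = ∑ k ∈ s, ‖f k‖)
    {i j : ι} (hi : i ∈ s) (hj : j ∈ s) (hij : i ≠ j) :
    ‖f i + f j‖ = ‖f i‖ + ‖f j‖ := by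
  classical
  have hj' : j ∈ s.erase i := mem_erase.2 ⟨hij.symm, hj⟩
  set t := (s.erase i).erase j
  have hsum : ∑ k ∈ s, f k = (f i + f j) + ∑ k ∈ t, f k := by
    rw [← add_sum_erase s f hi, ← add_sum_erase _ f hj', add_assoc]
  have hsum_norm : ∑ k ∈ s, ‖f k‖ = (‖f i‖ + ‖f j‖) + ∑ k ∈ t, ‖f k‖ := by
    rw [← add_sum_erase s _ hi, ← add_sum_erase _ _ hj', add_assoc]
  refine le_antisymm (norm_add_le _ _) ?_
  have hle := calc ∑ k ∈ s, ‖f k‖ = ‖∑ k ∈ s, f k‖ := h.symm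
    _ ≤ ‖f i + f j‖ + ‖∑ k ∈ t, f k‖ := hsum ▸ norm_add_le _ _
    _ ≤ ‖f i + f j‖ + ∑ k ∈ t, ‖f k‖ := by gcongr; exact norm_sum_le _ _
  linarith

theorem eq_of_norm_sum_eq_sum_norm {ι E : Type*} [NormedAddCommGroup E] [NormedSpace ℝ E]
    [StrictConvexSpace ℝ E] {s : Finset ι} {f : ι → E} (h : ‖∑ k ∈ s, f k‖ = ∑ k ∈ s, ‖f k‖)
    {i j : ι} (hi : i ∈ s) (hj : j ∈ s) (hnorm : ‖f i‖ = ‖f j‖) : f i = f j := by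
  obtain rfl | hij := eq_or_ne i j
  · rfl
  exact eq_of_norm_eq_of_norm_add_eq hnorm (norm_add_eq_of_norm_sum_eq_sum_norm h hi hj hij)

theorem ZMod.cexp_pow_val_eq_stdAddChar {N : ℕ} [NeZero N] (j : ZMod N) :
    Complex.exp (2 * Real.pi * Complex.I / N) ^ j.val = ZMod.stdAddChar j := by
  rw [stdAddChar_apply, toCircle_apply, ← Complex.exp_nat_mul]
  ring_nf

/-- Lemma 1 (converse rigidity part, modulus version): a coefficient
`K s = (1/d) ∑ x, ω^{-(s·x)} ω^{n x}` of the discrete Fourier transform of `B x = ω^{n x}`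
has unit modulus only when the exponent function is linear, `n x = t + s·x`,
in which case `K s = ω^t`. -/
theorem lemma1_converse_rigidity_modulus (d : ℕ) [NeZero d]
    (ω : ℂ) (hω : ω = Complex.exp (2 * Real.pi * Complex.I / d))
    (n : ZMod d → ZMod d) (s : ZMod d)
    (h : ‖
      ((1 / (d : ℂ)) * ∑ x : ZMod d, (ω ^ (s * x).val)⁻¹ * ω ^ (n x).val)‖ = 1) :
    ∃ t : ZMod d, (∀ x : ZMod d, n x = t + s * x) ∧
      (1 / (d : ℂ)) * (∑ x : ZMod d, (ω ^ (s * x).val)⁻¹ * ω ^ (n x).val) = ω ^ t.val := by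
  subst hω
  have hterm (x : ZMod d) :
      (ZMod.stdAddChar (s * x))⁻¹ * ZMod.stdAddChar (n x) = ZMod.stdAddChar (n x - s * x) := by
    rw [AddChar.map_sub_eq_div, div_eq_inv_mul]
  simp only [ZMod.cexp_pow_val_eq_stdAddChar, hterm] at h ⊢
  have hsum : ‖∑ x, ZMod.stdAddChar (n x - s * x)‖ = ∑ x, ‖ZMod.stdAddChar (n x - s * x)‖ := by
    rw [norm_mul, norm_div, norm_one, Complex.norm_natCast, one_div_mul_eq_div,
      div_eq_one_iff_eq (Nat.cast_ne_zero.2 (NeZero.ne d))] at h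
    simpa [AddChar.norm_apply] using h
  have hconst (x : ZMod d) : n x - s * x = n 0 := by
    refine ZMod.injective_stdAddChar ?_
    simpa using eq_of_norm_sum_eq_sum_norm hsum (mem_univ x) (mem_univ 0) (by simp)
  refine ⟨n 0, fun x => by linear_combination hconst x, ?_⟩
  simp only [hconst, sum_const, card_univ, ZMod.card, nsmul_eq_mul]
  rw [one_div, inv_mul_cancel_left₀ (NeZero.ne (d : ℂ))]
end

section
/- (Lemma 2.) Let λ_ν = (1/d) · |{x ∈ ZMod d : n(x) − x = ν}| for ν ∈ ZMod d, so that K(1) = ∑_ν λ_ν · ω^ν. Then for every natural number r, the l = r Fourier coefficient of the r-th power of B satisfies (1/d) · ∑_{x ∈ ZMod d} ω^{−((r : ZMod d)·x)} · B(x)^r = ∑_{ν ∈ ZMod d} λ_ν · (ω^ν)^r; that is, it is the convex combination of the r-th powers of the roots ω^ν with the same coefficients λ_ν as K(1). -/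
/-!
The map `ψ ν = ω ^ ν.val` is an additive character of `ZMod d`, since `ω ^ d = 1`. Hence
`ψ (r x)⁻¹ ψ (n x) ^ r = ψ (n x - x) ^ r`, and grouping the sum over `x` according to the value
`ν = n x - x` turns the Fourier coefficient into `∑ ν, λ_ν ψ ν ^ r`.
-/

open Finset

theorem Fintype.sum_comp_eq_sum_card_fiber_mul_s11 {ι κ R : Type*} [Fintype ι] [Fintype κ]
    [DecidableEq κ] [NonAssocSemiring R] (g : ι → κ) (f : κ → R) :
    ∑ i, f (g i) = ∑ j, (#{i | g i = j} : R) * f j := by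
  rw [← Finset.sum_fiberwise' univ g f]
  simp only [sum_const, nsmul_eq_mul]

theorem AddChar.inv_map_nsmul_mul_map_pow {A M : Type*} [AddCommGroup A] [DivisionCommMonoid M]
    (ψ : AddChar A M) (r : ℕ) (x y : A) :
    (ψ (r • x))⁻¹ * ψ y ^ r = ψ (y - x) ^ r := by
  rw [← ψ.map_nsmul_eq_pow, ← ψ.map_nsmul_eq_pow, smul_sub, ψ.map_sub_eq_div, div_eq_inv_mul]

/-- Lemma 2: with `λ_ν = (1/d) · #{x : n x - x = ν}` (the convex weights of
`K 1 = ∑ ν, λ_ν ω^ν`), for every natural number `r` the `l = r` Fourier coefficient of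
`B^r`, where `B x = ω^{n x}`, equals `∑ ν, λ_ν (ω^ν)^r`: the convex combination of the
`r`-th powers of the roots with the same coefficients. -/
theorem lemma2_powers (d : ℕ) [NeZero d]
    (ω : ℂ) (hω : ω = Complex.exp (2 * Real.pi * Complex.I / d))
    (n : ZMod d → ZMod d)
    (lam : ZMod d → ℝ)
    (hlam : ∀ ν, lam ν =
      (1 / (d : ℝ)) * ((univ.filter fun x : ZMod d => n x - x = ν).card : ℝ))
    (r : ℕ) :
    (1 / (d : ℂ)) * ∑ x : ZMod d, (ω ^ (((r : ZMod d)) * x).val)⁻¹ * (ω ^ (n x).val) ^ r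
      = ∑ ν : ZMod d, (lam ν : ℂ) * (ω ^ ν.val) ^ r := by
  have hωd : ω ^ d = 1 := hω ▸ (Complex.isPrimitiveRoot_exp d (NeZero.ne d)).pow_eq_one
  calc (1 / (d : ℂ)) * ∑ x : ZMod d, (ω ^ (((r : ZMod d)) * x).val)⁻¹ * (ω ^ (n x).val) ^ r
      = (1 / (d : ℂ)) * ∑ x, AddChar.zmodChar d hωd (n x - x) ^ r := by
        simp only [← AddChar.zmodChar_apply hωd, ← nsmul_eq_mul,
          AddChar.inv_map_nsmul_mul_map_pow]
    _ = ∑ ν, (lam ν : ℂ) * (ω ^ ν.val) ^ r := by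
        rw [Fintype.sum_comp_eq_sum_card_fiber_mul_s11 (fun x => n x - x)
          (AddChar.zmodChar d hωd · ^ r), mul_sum]
        simp only [hlam, AddChar.zmodChar_apply, ← mul_assoc]
        push_cast
        rfl -- the two sides differ only in the `Decidable` instance of the fibre filter
end
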